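/- arXiv:2105.01247 — 3 statements merged into one kernel-verified Lean document; each statement's English description precedes it below -/
import Mathlib

section
/- Every bounded linear operator from C(K) (K compact Hausdorff) into a Hilbert space H is absolutely 2-summing. -/
open scoped BigOperators
open MeasureTheory

noncomputable section

/-- The `n`-th approximation number of a bounded operator. On a Hilbert space these
coincide with the singular values of a compact operator, and summability of their `p`-th
powers forces compactness, so membership in the Schatten class `S_p` can be phrased
through them. -/
noncomputable def approxNumber {X Y : Type*} [NormedAddCommGroup X] [NormedSpace ℂ X]
    [NormedAddCommGroup Y] [NormedSpace ℂ Y] (T : X →L[ℂ] Y) (n : ℕ) : ℝ :=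
  sInf {c : ℝ | ∃ F : X →L[ℂ] Y,
    Module.finrank ℂ (LinearMap.range (F : X →ₗ[ℂ] Y)) ≤ n ∧ c = ‖T - F‖}

/-- Membership in the Schatten–von Neumann class `S_p`. -/
def MemSchatten {X Y : Type*} [NormedAddCommGroup X] [NormedSpace ℂ X]
    [NormedAddCommGroup Y] [NormedSpace ℂ Y] (p : ℝ) (T : X →L[ℂ] Y) : Prop :=
  Summable fun n : ℕ => approxNumber T n ^ p

/-- The Schatten `p`-quasinorm `σ_p`. -/
noncomputable def schattenNorm {X Y : Type*} [NormedAddCommGroup X] [NormedSpace ℂ X]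
    [NormedAddCommGroup Y] [NormedSpace ℂ Y] (p : ℝ) (T : X →L[ℂ] Y) : ℝ :=
  (∑' n : ℕ, approxNumber T n ^ p) ^ (1 / p)

/-- `T` is `s`-nuclear: `T x = ∑ₖ ⟨x'ₖ, x⟩ yₖ` with `∑ₖ ‖x'ₖ‖^s ‖yₖ‖^s < ∞`. -/
def IsNuclearS (s : ℝ) {X Y : Type*} [NormedAddCommGroup X] [NormedSpace ℂ X]
    [NormedAddCommGroup Y] [NormedSpace ℂ Y] (T : X →L[ℂ] Y) : Prop :=
  ∃ (x' : ℕ → (X →L[ℂ] ℂ)) (y : ℕ → Y),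
    (Summable fun k => ‖x' k‖ ^ s * ‖y k‖ ^ s) ∧
    ∀ x : X, HasSum (fun k => x' k x • y k) (T x)

/-- The `s`-nuclear quasinorm `ν_s`. -/
noncomputable def nuclearQuasinorm (s : ℝ) {X Y : Type*} [NormedAddCommGroup X]
    [NormedSpace ℂ X] [NormedAddCommGroup Y] [NormedSpace ℂ Y] (T : X →L[ℂ] Y) : ℝ :=
  sInf {c : ℝ | ∃ (x' : ℕ → (X →L[ℂ] ℂ)) (y : ℕ → Y),
    (Summable fun k => ‖x' k‖ ^ s * ‖y k‖ ^ s) ∧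
    (∀ x : X, HasSum (fun k => x' k x • y k) (T x)) ∧
    c = (∑' k : ℕ, ‖x' k‖ ^ s * ‖y k‖ ^ s) ^ (1 / s)}

/-- `A` is absolutely 2-summing. -/
def IsAbs2Summing {X Y : Type*} [NormedAddCommGroup X] [NormedSpace ℂ X]
    [NormedAddCommGroup Y] [NormedSpace ℂ Y] (A : X →L[ℂ] Y) : Prop :=
  ∃ C : ℝ, 0 ≤ C ∧ ∀ (n : ℕ) (x : Fin n → X) (M : ℝ), 0 ≤ M →
    (∀ x' : X →L[ℂ] ℂ, ‖x'‖ ≤ 1 → ∑ i, ‖x' (x i)‖ ^ 2 ≤ M ^ 2) →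
    ∑ i, ‖A (x i)‖ ^ 2 ≤ C ^ 2 * M ^ 2

/-- The 2-summing norm `π₂`. -/
noncomputable def pi2Norm {X Y : Type*} [NormedAddCommGroup X] [NormedSpace ℂ X]
    [NormedAddCommGroup Y] [NormedSpace ℂ Y] (A : X →L[ℂ] Y) : ℝ :=
  sInf {C : ℝ | 0 ≤ C ∧ ∀ (n : ℕ) (x : Fin n → X) (M : ℝ), 0 ≤ M →
    (∀ x' : X →L[ℂ] ℂ, ‖x'‖ ≤ 1 → ∑ i, ‖x' (x i)‖ ^ 2 ≤ M ^ 2) →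
    ∑ i, ‖A (x i)‖ ^ 2 ≤ C ^ 2 * M ^ 2}

/-- The algebraic multiplicity of `lam` as an eigenvalue of `T`: the dimension of the
generalized eigenspace `⋃ₙ ker (lam - T)ⁿ`. -/
noncomputable def algMult {X : Type*} [NormedAddCommGroup X] [NormedSpace ℂ X]
    (T : X →L[ℂ] X) (lam : ℂ) : ℕ :=
  Module.finrank ℂ
    ↥(⨆ n : ℕ, LinearMap.ker
      ((((lam • ContinuousLinearMap.id ℂ X - T) ^ n : X →L[ℂ] X)) : X →ₗ[ℂ] X))

/-- The sequence of eigenvalues of `T`, repeated according to algebraic multiplicities,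
belongs to `ℓ_p`. -/
def EigSeqMem (p : ℝ) {X : Type*} [NormedAddCommGroup X] [NormedSpace ℂ X]
    (T : X →L[ℂ] X) : Prop :=
  ∃ μ : ℕ → ℂ,
    (∀ lam : ℂ, lam ≠ 0 → Nat.card {n : ℕ | μ n = lam} = algMult T lam) ∧
    Summable fun n => ‖μ n‖ ^ p

/-- `γ_{S_r}(T)`: the infimum of `‖A‖ σ_r(U) ‖B‖` over all factorizations `T = B U A`
through an operator `U ∈ S_r(H)` on a Hilbert space `H`. -/
noncomputable def gammaS {X Y : Type*} [NormedAddCommGroup X] [NormedSpace ℂ X]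
    [NormedAddCommGroup Y] [NormedSpace ℂ Y] (r : ℝ) (T : X →L[ℂ] Y) : ℝ :=
  sInf {c : ℝ | ∃ (H : Type) (iN : NormedAddCommGroup H)
    (iP : InnerProductSpace ℂ H) (iC : CompleteSpace H)
    (A : X →L[ℂ] H) (U : H →L[ℂ] H) (B : H →L[ℂ] Y),
    MemSchatten r U ∧ T = B.comp (U.comp A) ∧ c = ‖A‖ * schattenNorm r U * ‖B‖}

end

/-!
Little Grothendieck inequality, with constant `√2`. Given `x₁, …, xₙ ∈ C(K)` with
`∑ᵢ |xᵢ(t)|² ≤ M²` for every `t`, take a partition of unity `(ρⱼ)_{j ∈ s}` subordinate to a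
finite cover on which every `xᵢ` oscillates by less than `δ`. Then `P θ = ∑ⱼ θⱼ ρⱼ` has norm
`≤ 1` from `ℓ^∞(s)` to `C(K)` and `P (xᵢ|ₛ)` is `δ`-close to `xᵢ`, so by continuity it suffices
to bound `T = A ∘ P` on the vectors `vᵢ = xᵢ|ₛ`, whose columns satisfy `∑ᵢ |vᵢⱼ|² ≤ M²`.

For `T : ℓ^∞(s) → H`, put `bⱼ = T eⱼ` and `yᵢ = T vᵢ`. Expanding `‖yᵢ‖² = ⟪T vᵢ, yᵢ⟫` and
applying Cauchy–Schwarz in `i` gives `∑ᵢ ‖yᵢ‖² ≤ M ∑ⱼ (∑ᵢ |⟪bⱼ, yᵢ⟫|²)^{1/2}`. Khintchine's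
inequality for independent uniform fourth roots of unity `εᵢ` (the `L¹`–`L²` comparison with
constant `√2`, from the fourth-moment bound `𝔼 ‖∑ᵢ εᵢ yᵢ‖⁴ ≤ 2 (∑ᵢ ‖yᵢ‖²)²` and Hölder) bounds
each square function by `√2 𝔼 |⟪bⱼ, ∑ᵢ εᵢ yᵢ⟫|`, and `∑ⱼ |⟪bⱼ, h⟫| ≤ ‖T‖ ‖h‖` by `ℓ¹`–`ℓ^∞`
duality. Since `𝔼 ‖∑ᵢ εᵢ yᵢ‖ ≤ (∑ᵢ ‖yᵢ‖²)^{1/2}`, this yields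
`∑ᵢ ‖yᵢ‖² ≤ √2 ‖T‖ M (∑ᵢ ‖yᵢ‖²)^{1/2}`.
-/

open Complex (I)
open scoped ComplexInnerProductSpace

lemma Fintype.sum_fin_succ_pi {β M : Type*} [Fintype β] [AddCommMonoid M] {n : ℕ}
    (F : (Fin (n + 1) → β) → M) :
    ∑ ε, F ε = ∑ b, ∑ ε : Fin n → β, F (Fin.cons b ε) := by
  rw [← (Fin.consEquiv fun _ => β).sum_comp, Fintype.sum_prod_type]
  rfl

lemma Finset.sum_sq_pow_three_le {ι : Type*} (s : Finset ι) (f : ι → ℝ) (hf : ∀ i ∈ s, 0 ≤ f i) :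
    (∑ i ∈ s, f i ^ 2) ^ 3 ≤ (∑ i ∈ s, f i) ^ 2 * ∑ i ∈ s, f i ^ 4 := by
  set t₁ := ∑ i ∈ s, f i
  set t₂ := ∑ i ∈ s, f i ^ 2
  set t₃ := ∑ i ∈ s, f i ^ 3
  set t₄ := ∑ i ∈ s, f i ^ 4
  have h₁₃ : t₂ ^ 2 ≤ t₁ * t₃ :=
    Finset.sum_sq_le_sum_mul_sum_of_sq_le_mul s hf (fun i hi => pow_nonneg (hf i hi) 3)
      fun i _ => le_of_eq (by ring)
  have h₂₄ : t₃ ^ 2 ≤ t₂ * t₄ :=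
    Finset.sum_sq_le_sum_mul_sum_of_sq_le_mul s (fun i _ => sq_nonneg (f i))
      (fun i _ => by positivity) fun i _ => le_of_eq (by ring)
  have ht₂ : 0 ≤ t₂ := by positivity
  rcases ht₂.eq_or_lt with h₀ | hpos
  · rw [← h₀, zero_pow three_ne_zero]
    exact mul_nonneg (sq_nonneg _) (Finset.sum_nonneg fun i _ => by positivity)
  · refine le_of_mul_le_mul_right ?_ hpos
    calc t₂ ^ 3 * t₂ = (t₂ ^ 2) ^ 2 := by ring
      _ ≤ (t₁ * t₃) ^ 2 := pow_le_pow_left₀ (sq_nonneg _) h₁₃ 2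
      _ = t₁ ^ 2 * t₃ ^ 2 := by ring
      _ ≤ t₁ ^ 2 * (t₂ * t₄) := by gcongr
      _ = t₁ ^ 2 * t₄ * t₂ := by ring

lemma le_sq_of_le_mul_sqrt {S c : ℝ} (h : S ≤ c * √S) : S ≤ c ^ 2 := by
  rcases le_or_gt S 0 with hS | hS
  · nlinarith
  · nlinarith [Real.sq_sqrt hS.le, Real.sqrt_nonneg S]

lemma map_pi_eq_sum_smul_single {R ι M F : Type*} [CommSemiring R] [Fintype ι] [DecidableEq ι]
    [AddCommMonoid M] [Module R M] [FunLike F (ι → R) M] [LinearMapClass F R (ι → R) M] (T : F)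
    (θ : ι → R) :
    T θ = ∑ j, θ j • T (Pi.single j 1) := by
  conv_lhs => rw [← Finset.univ_sum_single θ, map_sum]
  refine Finset.sum_congr rfl fun j _ => ?_
  rw [← map_smul, ← Pi.single_smul', smul_eq_mul, mul_one]

lemma ContinuousLinearMap.sum_norm_apply_single_le {𝕜 ι : Type*} [RCLike 𝕜] [Fintype ι]
    [DecidableEq ι] (φ : (ι → 𝕜) →L[𝕜] 𝕜) : ∑ j, ‖φ (Pi.single j 1)‖ ≤ ‖φ‖ := by
  choose c hc₁ hc using fun j => RCLike.exists_norm_eq_mul_self (φ (Pi.single j 1))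
  have hθ : ‖c‖ ≤ 1 := (pi_norm_le_iff_of_nonneg zero_le_one).2 fun j => (hc₁ j).le
  have hφc : ((∑ j, ‖φ (Pi.single j 1)‖ : ℝ) : 𝕜) = φ c := by
    rw [map_pi_eq_sum_smul_single φ c]
    push_cast
    simp [hc]
  calc ∑ j, ‖φ (Pi.single j 1)‖ = ‖φ c‖ := by
        rw [← hφc, RCLike.norm_ofReal, abs_of_nonneg (by positivity)]
    _ ≤ ‖φ‖ * ‖c‖ := φ.le_opNorm c
    _ ≤ ‖φ‖ := mul_le_of_le_one_right (norm_nonneg _) hθ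

/-- `ε` ranges uniformly over `Fin n → Fin 4`, so the `I ^ ε i` are independent uniformly
distributed fourth roots of unity, and sums over `ε` are `4 ^ n` times expectations. -/
def phaseSum {E : Type*} [AddCommMonoid E] [Module ℂ E] {n : ℕ} (y : Fin n → E)
    (ε : Fin n → Fin 4) : E :=
  ∑ i, I ^ (ε i : ℕ) • y i

lemma phaseSum_cons {E : Type*} [AddCommMonoid E] [Module ℂ E] {n : ℕ} (y : Fin (n + 1) → E)
    (k : Fin 4) (ε : Fin n → Fin 4) :
    phaseSum y (Fin.cons k ε) = phaseSum (Fin.tail y) ε + I ^ (k : ℕ) • y 0 := by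
  simp [phaseSum, Fin.sum_univ_succ, Fin.tail, add_comm]

lemma sum_phaseSum_succ {E M : Type*} [AddCommMonoid E] [Module ℂ E] [AddCommMonoid M] {n : ℕ}
    (G : E → M) (y : Fin (n + 1) → E) :
    ∑ ε, G (phaseSum y ε) = ∑ ε, ∑ k : Fin 4, G (phaseSum (Fin.tail y) ε + I ^ (k : ℕ) • y 0) := by
  rw [Fintype.sum_fin_succ_pi, Finset.sum_comm]
  simp only [phaseSum_cons]

section Khintchine

variable {E : Type*} [NormedAddCommGroup E] [InnerProductSpace ℂ E]

lemma norm_add_I_pow_smul_sq (u v : E) (k : ℕ) :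
    ‖u + I ^ k • v‖ ^ 2 = ‖u‖ ^ 2 + ‖v‖ ^ 2 + 2 * (I ^ k * ⟪u, v⟫).re := by
  rw [norm_add_sq (𝕜 := ℂ), inner_smul_right, norm_smul, norm_pow, Complex.norm_I, one_pow,
    one_mul, RCLike.re_to_complex]
  ring

lemma sum_norm_add_I_pow_smul_sq (u v : E) :
    ∑ k : Fin 4, ‖u + I ^ (k : ℕ) • v‖ ^ 2 = 4 * (‖u‖ ^ 2 + ‖v‖ ^ 2) := by
  rw [Fin.sum_univ_eq_sum_range (fun k => ‖u + I ^ k • v‖ ^ 2)]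
  simp only [Finset.sum_range_succ, Finset.sum_range_zero, norm_add_I_pow_smul_sq, pow_zero,
    pow_one, Complex.I_sq, Complex.I_pow_three, one_mul, neg_mul, Complex.neg_re, Complex.I_mul_re]
  ring

lemma sum_norm_add_I_pow_smul_pow_four_le (u v : E) :
    ∑ k : Fin 4, ‖u + I ^ (k : ℕ) • v‖ ^ 4 ≤
      4 * ((‖u‖ ^ 2 + ‖v‖ ^ 2) ^ 2 + 2 * ‖u‖ ^ 2 * ‖v‖ ^ 2) := by
  have hcs : ⟪u, v⟫.re ^ 2 + ⟪u, v⟫.im ^ 2 ≤ (‖u‖ * ‖v‖) ^ 2 := by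
    rw [sq, sq, ← Complex.normSq_apply, ← Complex.sq_norm]
    gcongr
    exact norm_inner_le_norm u v
  rw [Fin.sum_univ_eq_sum_range (fun k => ‖u + I ^ k • v‖ ^ 4)]
  simp only [Finset.sum_range_succ, Finset.sum_range_zero,
    fun x : E => show ‖x‖ ^ 4 = (‖x‖ ^ 2) ^ 2 by ring, norm_add_I_pow_smul_sq, pow_zero, pow_one,
    Complex.I_sq, Complex.I_pow_three, one_mul, neg_mul, Complex.neg_re, Complex.I_mul_re]
  nlinarith [hcs]

lemma sum_norm_phaseSum_sq {n : ℕ} (y : Fin n → E) :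
    ∑ ε, ‖phaseSum y ε‖ ^ 2 = 4 ^ n * ∑ i, ‖y i‖ ^ 2 := by
  induction n with
  | zero => simp [phaseSum]
  | succ n ih =>
    rw [sum_phaseSum_succ (‖·‖ ^ 2)]
    simp only [sum_norm_add_I_pow_smul_sq, ← Finset.mul_sum, Finset.sum_add_distrib, ih,
      Fin.sum_univ_succ (fun i => ‖y i‖ ^ 2), Finset.sum_const, Finset.card_univ, Fintype.card_fun,
      Fintype.card_fin, nsmul_eq_mul, Nat.cast_pow, Nat.cast_ofNat, Fin.tail]
    ring

lemma sum_norm_phaseSum_pow_four_le {n : ℕ} (y : Fin n → E) :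
    ∑ ε, ‖phaseSum y ε‖ ^ 4 ≤ 2 * 4 ^ n * (∑ i, ‖y i‖ ^ 2) ^ 2 := by
  induction n with
  | zero => simp [phaseSum]
  | succ n ih =>
    set h := phaseSum (Fin.tail y)
    set a := ‖y 0‖ ^ 2
    set B := ∑ i, ‖Fin.tail y i‖ ^ 2
    have h4 : ∑ ε, ‖h ε‖ ^ 4 ≤ 2 * 4 ^ n * B ^ 2 := ih _
    have h2 : ∑ ε, ‖h ε‖ ^ 2 = 4 ^ n * B := sum_norm_phaseSum_sq _
    calc ∑ ε, ‖phaseSum y ε‖ ^ 4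
        = ∑ ε, ∑ k : Fin 4, ‖h ε + I ^ (k : ℕ) • y 0‖ ^ 4 := sum_phaseSum_succ (‖·‖ ^ 4) y
      _ ≤ ∑ ε, 4 * ((‖h ε‖ ^ 2 + a) ^ 2 + 2 * ‖h ε‖ ^ 2 * a) :=
          Finset.sum_le_sum fun ε _ => sum_norm_add_I_pow_smul_pow_four_le _ _
      _ = 4 * (∑ ε, ‖h ε‖ ^ 4 + 4 * a * ∑ ε, ‖h ε‖ ^ 2 + 4 ^ n * a ^ 2) := by
          rw [Finset.sum_congr rfl fun ε _ => show 4 * ((‖h ε‖ ^ 2 + a) ^ 2 + 2 * ‖h ε‖ ^ 2 * a) =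
            4 * ‖h ε‖ ^ 4 + 16 * a * ‖h ε‖ ^ 2 + 4 * a ^ 2 by ring]
          simp only [Finset.sum_add_distrib, ← Finset.mul_sum, Finset.sum_const, Finset.card_univ,
            Fintype.card_fun, Fintype.card_fin, nsmul_eq_mul, Nat.cast_pow, Nat.cast_ofNat]
          ring
      _ ≤ 2 * 4 ^ (n + 1) * (a + B) ^ 2 := by
          rw [h2, pow_succ (4 : ℝ) n]
          nlinarith [h4, mul_nonneg (pow_nonneg zero_le_four n) (sq_nonneg a)]
      _ = 2 * 4 ^ (n + 1) * (∑ i, ‖y i‖ ^ 2) ^ 2 := by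
          rw [Fin.sum_univ_succ]; rfl

lemma khintchine_phaseSum {n : ℕ} (y : Fin n → E) :
    4 ^ n * √(∑ i, ‖y i‖ ^ 2) ≤ √2 * ∑ ε, ‖phaseSum y ε‖ := by
  set A := ∑ i, ‖y i‖ ^ 2
  set t₁ := ∑ ε, ‖phaseSum y ε‖
  have hA : 0 ≤ A := by positivity
  have hHolder :=
    Finset.sum_sq_pow_three_le Finset.univ (fun ε => ‖phaseSum y ε‖) fun _ _ => norm_nonneg _
  rw [sum_norm_phaseSum_sq] at hHolder
  suffices key : (4 ^ n) ^ 2 * A ≤ 2 * t₁ ^ 2 by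
    rwa [← pow_le_pow_iff_left₀ (by positivity) (by positivity) two_ne_zero, mul_pow, mul_pow,
      Real.sq_sqrt hA, Real.sq_sqrt zero_le_two]
  rcases hA.eq_or_lt with h₀ | hpos
  · rw [← h₀, mul_zero]; positivity
  · refine le_of_mul_le_mul_right ?_ (by positivity : 0 < 4 ^ n * A ^ 2)
    calc (4 ^ n) ^ 2 * A * (4 ^ n * A ^ 2) = (4 ^ n * A) ^ 3 := by ring
      _ ≤ t₁ ^ 2 * (2 * 4 ^ n * A ^ 2) :=
          hHolder.trans (mul_le_mul_of_nonneg_left (sum_norm_phaseSum_pow_four_le y) (sq_nonneg _))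
      _ = 2 * t₁ ^ 2 * (4 ^ n * A ^ 2) := by ring

lemma sum_norm_phaseSum_le {n : ℕ} (y : Fin n → E) :
    ∑ ε, ‖phaseSum y ε‖ ≤ 4 ^ n * √(∑ i, ‖y i‖ ^ 2) := by
  have hcs : (∑ ε, ‖phaseSum y ε‖) ^ 2 ≤ 4 ^ n * ∑ ε, ‖phaseSum y ε‖ ^ 2 := by
    simpa using sq_sum_le_card_mul_sum_sq (s := Finset.univ) (f := fun ε => ‖phaseSum y ε‖)
  rw [sum_norm_phaseSum_sq] at hcs
  rw [← pow_le_pow_iff_left₀ (by positivity) (by positivity) two_ne_zero, mul_pow,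
    Real.sq_sqrt (by positivity)]
  linarith

end Khintchine

section LittleGrothendieck

variable {H : Type*} [NormedAddCommGroup H] [InnerProductSpace ℂ H]
  {ι : Type*} [Fintype ι] [DecidableEq ι]

lemma sum_norm_sq_apply_le_mul_sum_sqrt {n : ℕ} (T : (ι → ℂ) →L[ℂ] H) (v : Fin n → ι → ℂ) {M : ℝ}
    (hv : ∀ j, ∑ i, ‖v i j‖ ^ 2 ≤ M ^ 2) (hM : 0 ≤ M) :
    ∑ i, ‖T (v i)‖ ^ 2 ≤ M * ∑ j, √(∑ i, ‖⟪T (Pi.single j 1), T (v i)⟫‖ ^ 2) := by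
  have hrow : ∀ i, ‖T (v i)‖ ^ 2 ≤ ∑ j, ‖v i j‖ * ‖⟪T (Pi.single j 1), T (v i)⟫‖ := fun i => by
    calc ‖T (v i)‖ ^ 2 = ‖⟪∑ j, v i j • T (Pi.single j 1), T (v i)⟫‖ := by
          rw [← map_pi_eq_sum_smul_single, inner_self_eq_norm_sq_to_K]; simp
      _ = ‖∑ j, (starRingEnd ℂ) (v i j) * ⟪T (Pi.single j 1), T (v i)⟫‖ := by
          simp only [sum_inner, inner_smul_left]
      _ ≤ ∑ j, ‖v i j‖ * ‖⟪T (Pi.single j 1), T (v i)⟫‖ := by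
        refine (norm_sum_le _ _).trans_eq ?_
        simp
  calc ∑ i, ‖T (v i)‖ ^ 2 ≤ ∑ j, ∑ i, ‖v i j‖ * ‖⟪T (Pi.single j 1), T (v i)⟫‖ := by
        rw [Finset.sum_comm]; exact Finset.sum_le_sum fun i _ => hrow i
    _ ≤ ∑ j, √(∑ i, ‖v i j‖ ^ 2) * √(∑ i, ‖⟪T (Pi.single j 1), T (v i)⟫‖ ^ 2) :=
        Finset.sum_le_sum fun j _ => Real.sum_mul_le_sqrt_mul_sqrt _ _ _
    _ ≤ ∑ j, M * √(∑ i, ‖⟪T (Pi.single j 1), T (v i)⟫‖ ^ 2) := by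
        gcongr with j
        exact Real.sqrt_le_left hM |>.2 (hv j)
    _ = M * ∑ j, √(∑ i, ‖⟪T (Pi.single j 1), T (v i)⟫‖ ^ 2) := (Finset.mul_sum ..).symm

lemma sum_norm_inner_apply_single_le (T : (ι → ℂ) →L[ℂ] H) (h : H) :
    ∑ j, ‖⟪T (Pi.single j 1), h⟫‖ ≤ ‖T‖ * ‖h‖ :=
  calc ∑ j, ‖⟪T (Pi.single j 1), h⟫‖ = ∑ j, ‖(innerSL ℂ h ∘L T) (Pi.single j 1)‖ := by
        simp [norm_inner_symm]
    _ ≤ ‖innerSL ℂ h ∘L T‖ := ContinuousLinearMap.sum_norm_apply_single_le _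
    _ ≤ ‖T‖ * ‖h‖ := by
        refine (ContinuousLinearMap.opNorm_comp_le _ _).trans_eq ?_
        rw [innerSL_apply_norm, mul_comm]

theorem sum_norm_sq_apply_le_two_mul {n : ℕ} (T : (ι → ℂ) →L[ℂ] H) (v : Fin n → ι → ℂ) {M : ℝ}
    (hv : ∀ j, ∑ i, ‖v i j‖ ^ 2 ≤ M ^ 2) (hM : 0 ≤ M) :
    ∑ i, ‖T (v i)‖ ^ 2 ≤ 2 * ‖T‖ ^ 2 * M ^ 2 := by
  set y := fun i => T (v i)
  set S := ∑ i, ‖y i‖ ^ 2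
  set b := fun j => T (Pi.single j 1)
  have hKh : ∀ j, 4 ^ n * √(∑ i, ‖⟪b j, y i⟫‖ ^ 2) ≤ √2 * ∑ ε, ‖⟪b j, phaseSum y ε⟫‖ := by
    intro j
    simpa only [phaseSum, inner_sum, inner_smul_right, smul_eq_mul] using
      khintchine_phaseSum fun i => ⟪b j, y i⟫
  have key : 4 ^ n * S ≤ 4 ^ n * (√2 * ‖T‖ * M * √S) :=
    calc 4 ^ n * S ≤ 4 ^ n * (M * ∑ j, √(∑ i, ‖⟪b j, y i⟫‖ ^ 2)) := by
          gcongr; exact sum_norm_sq_apply_le_mul_sum_sqrt T v hv hM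
      _ = M * ∑ j, 4 ^ n * √(∑ i, ‖⟪b j, y i⟫‖ ^ 2) := by
          rw [mul_left_comm, Finset.mul_sum]
      _ ≤ M * ∑ j, √2 * ∑ ε, ‖⟪b j, phaseSum y ε⟫‖ :=
          mul_le_mul_of_nonneg_left (Finset.sum_le_sum fun j _ => hKh j) hM
      _ = M * √2 * ∑ ε, ∑ j, ‖⟪b j, phaseSum y ε⟫‖ := by
          rw [← Finset.mul_sum, Finset.sum_comm]; ring
      _ ≤ M * √2 * ∑ ε, ‖T‖ * ‖phaseSum y ε‖ := by
          gcongr with ε; exact sum_norm_inner_apply_single_le T _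
      _ ≤ M * √2 * (‖T‖ * (4 ^ n * √S)) := by
          rw [← Finset.mul_sum]; gcongr; exact sum_norm_phaseSum_le y
      _ = 4 ^ n * (√2 * ‖T‖ * M * √S) := by ring
  calc S ≤ (√2 * ‖T‖ * M) ^ 2 := le_sq_of_le_mul_sqrt (le_of_mul_le_mul_left key (by positivity))
    _ = 2 * ‖T‖ ^ 2 * M ^ 2 := by rw [mul_pow, mul_pow, Real.sq_sqrt zero_le_two]

end LittleGrothendieck

section PartitionApprox

variable {K : Type*} [TopologicalSpace K] {ι : Type*} [Fintype ι]

noncomputable def sumSmulCLM (ρ : ι → C(K, ℝ)) : (ι → ℂ) →L[ℂ] C(K, ℂ) :=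
  ∑ j, (ContinuousLinearMap.proj j).smulRight ⟨fun y => (ρ j y : ℂ), by fun_prop⟩

lemma sumSmulCLM_apply_apply (ρ : ι → C(K, ℝ)) (θ : ι → ℂ) (y : K) :
    sumSmulCLM ρ θ y = ∑ j, θ j * ρ j y := by
  simp [sumSmulCLM]

variable [CompactSpace K]

lemma norm_sumSmulCLM_le_one (ρ : ι → C(K, ℝ)) (hρ₀ : ∀ j y, 0 ≤ ρ j y)
    (hρ₁ : ∀ y, ∑ j, ρ j y ≤ 1) : ‖sumSmulCLM ρ‖ ≤ 1 := by
  refine ContinuousLinearMap.opNorm_le_bound _ zero_le_one fun θ => ?_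
  rw [one_mul, ContinuousMap.norm_le _ (norm_nonneg θ)]
  intro y
  calc ‖sumSmulCLM ρ θ y‖ ≤ ∑ j, ‖θ j‖ * ρ j y := by
        rw [sumSmulCLM_apply_apply]
        refine (norm_sum_le _ _).trans_eq (Finset.sum_congr rfl fun j _ => ?_)
        rw [norm_mul, Complex.norm_real, Real.norm_of_nonneg (hρ₀ j y)]
    _ ≤ ∑ j, ‖θ‖ * ρ j y := by gcongr with j; exacts [hρ₀ j y, norm_le_pi_norm θ j]
    _ ≤ ‖θ‖ := by rw [← Finset.mul_sum]; exact mul_le_of_le_one_right (norm_nonneg θ) (hρ₁ y)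

lemma norm_sumSmulCLM_sample_sub_le (ρ : ι → C(K, ℝ)) (hρ₀ : ∀ j y, 0 ≤ ρ j y)
    (hρ₁ : ∀ y, ∑ j, ρ j y = 1) (t : ι → K) (f : C(K, ℂ)) {δ : ℝ} (hδ : 0 ≤ δ)
    (hf : ∀ j y, ρ j y ≠ 0 → dist (f (t j)) (f y) ≤ δ) :
    ‖sumSmulCLM ρ (fun j => f (t j)) - f‖ ≤ δ := by
  rw [ContinuousMap.norm_le _ hδ]
  intro y
  have hsum : (sumSmulCLM ρ (fun j => f (t j)) - f) y = ∑ j, (f (t j) - f y) * ρ j y := by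
    have : ∑ j, (ρ j y : ℂ) = 1 := by exact_mod_cast hρ₁ y
    simp only [ContinuousMap.sub_apply, sumSmulCLM_apply_apply, sub_mul, Finset.sum_sub_distrib,
      ← Finset.mul_sum, this, mul_one]
  calc ‖(sumSmulCLM ρ (fun j => f (t j)) - f) y‖ ≤ ∑ j, ρ j y * δ := by
        rw [hsum]
        refine (norm_sum_le _ _).trans (Finset.sum_le_sum fun j _ => ?_)
        rw [norm_mul, Complex.norm_real, Real.norm_of_nonneg (hρ₀ j y), mul_comm]
        rcases eq_or_ne (ρ j y) 0 with h | h
        · simp [h]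
        · exact mul_le_mul_of_nonneg_left (dist_eq_norm (f (t j)) (f y) ▸ hf j y h) (hρ₀ j y)
    _ = δ := by rw [← Finset.sum_mul, hρ₁ y, one_mul]

variable [T2Space K]

lemma exists_partition_dist_lt {α E : Type*} [Finite α] [PseudoMetricSpace E] (f : α → C(K, E))
    {δ : ℝ} (hδ : 0 < δ) :
    ∃ (s : Finset K) (ρ : s → C(K, ℝ)), (∀ j y, 0 ≤ ρ j y) ∧ (∀ y, ∑ j, ρ j y = 1) ∧
      ∀ j y, ρ j y ≠ 0 → ∀ i, dist (f i j) (f i y) < δ := by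
  set U : K → Set K := fun t => {y | ∀ i, dist (f i t) (f i y) < δ}
  have hU : ∀ t, IsOpen (U t) := fun t => by
    simp only [U, Set.ofPred_forall]
    exact isOpen_iInter_of_finite fun i => isOpen_lt (by fun_prop) continuous_const
  obtain ⟨s, hs⟩ := isCompact_univ.elim_finite_subcover U hU
    fun t _ => Set.mem_iUnion.2 ⟨t, fun i => by simpa using hδ⟩
  obtain ⟨ρ, hρ⟩ := PartitionOfUnity.exists_isSubordinate isClosed_univ (fun j : s => U j)
    (fun j => hU j) fun y _ => by simpa using hs (Set.mem_univ y)
  refine ⟨s, fun j => ρ j, fun j y => ρ.nonneg j y, fun y => ?_,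
    fun j y hy => hρ j (subset_tsupport _ hy)⟩
  rw [← finsum_eq_sum_of_fintype]
  exact ρ.sum_eq_one (Set.mem_univ y)

end PartitionApprox

theorem continuousMap_to_hilbert_abs2Summing_general {K : Type*} [TopologicalSpace K]
    [CompactSpace K] [T2Space K] {H : Type*} [NormedAddCommGroup H]
    [InnerProductSpace ℂ H] (A : C(K, ℂ) →L[ℂ] H) :
    IsAbs2Summing A := by
  classical
  refine ⟨√2 * ‖A‖, by positivity, fun n x M hM hx => ?_⟩
  have hcol : ∀ t, ∑ i, ‖x i t‖ ^ 2 ≤ M ^ 2 := fun t =>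
    hx (ContinuousMap.evalCLM ℂ t) <| ContinuousLinearMap.opNorm_le_bound _ zero_le_one
      fun f => by simpa using f.norm_coe_le_norm t
  rw [mul_pow, Real.sq_sqrt zero_le_two]
  have hclosed : IsClosed {z : Fin n → C(K, ℂ) | ∑ i, ‖A (z i)‖ ^ 2 ≤ 2 * ‖A‖ ^ 2 * M ^ 2} :=
    isClosed_le (by fun_prop) continuous_const
  refine hclosed.closure_subset (Metric.mem_closure_iff.2 fun δ hδ => ?_)
  obtain ⟨s, ρ, hρ₀, hρ₁, hρx⟩ := exists_partition_dist_lt x (half_pos hδ)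
  have hP : ‖sumSmulCLM ρ‖ ≤ 1 := norm_sumSmulCLM_le_one ρ hρ₀ fun y => (hρ₁ y).le
  refine ⟨fun i => sumSmulCLM ρ fun j => x i j, ?_, ?_⟩
  · calc ∑ i, ‖(A ∘L sumSmulCLM ρ) fun j => x i j‖ ^ 2 ≤ 2 * ‖A ∘L sumSmulCLM ρ‖ ^ 2 * M ^ 2 :=
          sum_norm_sq_apply_le_two_mul _ _ (fun j => hcol j) hM
      _ ≤ 2 * ‖A‖ ^ 2 * M ^ 2 := by
          gcongr
          exact (A.opNorm_comp_le _).trans (mul_le_of_le_one_right (norm_nonneg A) hP)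
  · rw [dist_pi_lt_iff hδ]
    intro i
    rw [dist_comm, dist_eq_norm]
    refine lt_of_le_of_lt ?_ (half_lt_self hδ)
    exact norm_sumSmulCLM_sample_sub_le ρ hρ₀ hρ₁ _ (x i) (half_pos hδ).le
      fun j y hy => (hρx j y hy i).le

/-- every bounded operator from `C(K)` (`K` compact Hausdorff) to a Hilbert
space is absolutely 2-summing. -/
theorem continuousMap_to_hilbert_abs2Summing {K : Type*} [TopologicalSpace K]
    [CompactSpace K] [T2Space K] {H : Type*} [NormedAddCommGroup H]
    [InnerProductSpace ℂ H] [CompleteSpace H] (A : C(K, ℂ) →L[ℂ] H) :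
    IsAbs2Summing A :=
  continuousMap_to_hilbert_abs2Summing_general A
end

section
/- Let X, Y be Banach spaces and T : X → Y, S : Y → X bounded linear operators such that both T ∘ S and S ∘ T are compact. Then the nonzero eigenvalues of T ∘ S and of S ∘ T coincide, counted with algebraic multiplicities. -/
open scoped BigOperators
open MeasureTheory

/-!
For `μ ≠ 0`, `g` maps the generalized `μ`-eigenspace of `f ∘ g` into that of `g ∘ f`, because it
intertwines `f ∘ g - μ` with `g ∘ f - μ`. It is injective there: its kernel lies in the
`0`-eigenspace of `f ∘ g`, which meets the generalized `μ`-eigenspace trivially. With `f` mapping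
back the same way, the two generalized eigenspaces have the same rank.
-/

open Module End

section
universe u v w
variable {R : Type u} {M : Type v} {N : Type w} [CommRing R] [AddCommGroup M] [Module R M]
  [AddCommGroup N] [Module R N]

theorem Module.End.mapsTo_maxGenEigenspace_comp_comm (f : M →ₗ[R] N) (g : N →ₗ[R] M) (μ : R) :
    Set.MapsTo g (maxGenEigenspace (f ∘ₗ g) μ) (maxGenEigenspace (g ∘ₗ f) μ) := by
  have hsemi : Function.Semiconj g (f ∘ₗ g - μ • 1 : End R N) (g ∘ₗ f - μ • 1 : End R M) :=
    fun x => by simp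
  intro x hx
  obtain ⟨k, hk⟩ := (mem_maxGenEigenspace _ _ _).1 hx
  refine (mem_maxGenEigenspace _ _ _).2 ⟨k, ?_⟩
  rw [pow_apply] at hk ⊢
  rw [← hsemi.iterate_right k x, hk, map_zero]

variable [IsDomain R]

theorem Module.End.disjoint_maxGenEigenspace_comp_ker [IsTorsionFree R N]
    (f : M →ₗ[R] N) (g : N →ₗ[R] M) {μ : R} (hμ : μ ≠ 0) :
    Disjoint (maxGenEigenspace (f ∘ₗ g) μ) (LinearMap.ker g) := by
  have hker : LinearMap.ker g ≤ maxGenEigenspace (f ∘ₗ g) 0 := fun x hx =>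
    eigenspace_le_maxGenEigenspace (mem_eigenspace_iff.2 (by simp_all))
  exact (disjoint_genEigenspace _ hμ ⊤ ⊤).mono_right hker

theorem Module.End.lift_rank_maxGenEigenspace_comp_le [IsTorsionFree R N]
    (f : M →ₗ[R] N) (g : N →ₗ[R] M) {μ : R} (hμ : μ ≠ 0) :
    Cardinal.lift.{v} (Module.rank R (maxGenEigenspace (f ∘ₗ g) μ)) ≤
      Cardinal.lift.{w} (Module.rank R (maxGenEigenspace (g ∘ₗ f) μ)) :=
  LinearMap.lift_rank_le_of_injective (g.restrict (mapsTo_maxGenEigenspace_comp_comm f g μ)) <|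
    (LinearMap.injective_restrict_iff _).2 (disjoint_maxGenEigenspace_comp_ker f g hμ)

theorem Module.End.finrank_maxGenEigenspace_comp_comm [IsTorsionFree R M] [IsTorsionFree R N]
    (f : M →ₗ[R] N) (g : N →ₗ[R] M) {μ : R} (hμ : μ ≠ 0) :
    finrank R (maxGenEigenspace (f ∘ₗ g) μ) = finrank R (maxGenEigenspace (g ∘ₗ f) μ) := by
  have h := le_antisymm (lift_rank_maxGenEigenspace_comp_le f g hμ)
    (lift_rank_maxGenEigenspace_comp_le g f hμ)
  simpa only [Cardinal.toNat_lift, finrank] using congrArg Cardinal.toNat h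

end

theorem algMult_eq_finrank_maxGenEigenspace {X : Type*}
    [NormedAddCommGroup X] [NormedSpace ℂ X] (T : X →L[ℂ] X) (lam : ℂ) :
    algMult T lam = finrank ℂ (maxGenEigenspace (T : End ℂ X) lam) := by
  have hker (n : ℕ) : LinearMap.ker (((lam • ContinuousLinearMap.id ℂ X - T) ^ n : X →L[ℂ] X) :
      X →ₗ[ℂ] X) = genEigenspace (T : End ℂ X) lam n := by
    have hneg : ((lam • ContinuousLinearMap.id ℂ X - T : X →L[ℂ] X) : End ℂ X) =
        -((T : End ℂ X) - lam • 1) := by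
      ext; simp
    rw [genEigenspace_nat, ContinuousLinearMap.toLinearMap_pow, hneg]
    rcases n.even_or_odd with h | h
    · rw [h.neg_pow]
    · rw [h.neg_pow, LinearMap.ker_neg]
  rw [algMult, ← iSup_genEigenspace_eq, iSup_congr hker]

theorem eigenvalues_comp_comm_general {X Y : Type*}
    [NormedAddCommGroup X] [NormedSpace ℂ X]
    [NormedAddCommGroup Y] [NormedSpace ℂ Y]
    (T : X →L[ℂ] Y) (S : Y →L[ℂ] X) :
    ∀ lam : ℂ, lam ≠ 0 → algMult (T.comp S) lam = algMult (S.comp T) lam := by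
  intro lam hlam
  simp only [algMult_eq_finrank_maxGenEigenspace]
  exact finrank_maxGenEigenspace_comp_comm _ _ hlam

/-- if `T ∘ S` and `S ∘ T` are compact, their nonzero eigenvalues coincide,
counted with algebraic multiplicities. -/
theorem eigenvalues_comp_comm {X Y : Type*}
    [NormedAddCommGroup X] [NormedSpace ℂ X] [CompleteSpace X]
    [NormedAddCommGroup Y] [NormedSpace ℂ Y] [CompleteSpace Y]
    (T : X →L[ℂ] Y) (S : Y →L[ℂ] X)
    (hTS : IsCompactOperator ⇑(T.comp S)) (hST : IsCompactOperator ⇑(S.comp T)) :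
    ∀ lam : ℂ, lam ≠ 0 → algMult (T.comp S) lam = algMult (S.comp T) lam :=
  eigenvalues_comp_comm_general T S
end

section
/- There exists a continuous function f on the unit circle 𝕋 whose sequence of Fourier coefficients lies in ℓ_2 but not in ℓ_p for any p < 2. -/
open scoped BigOperators
open MeasureTheory

instance : Fact (0 < 2 * Real.pi) := ⟨Real.two_pi_pos⟩

/-!
Carleman's function is `f = ∑ₖ cₖ e_{2^k} Pₖ`, where `Pₖ` is the `k`-th Rudin–Shapiro
polynomial: its `2^k` coefficients are unimodular, yet `|Pₖ|² + |Qₖ|² = 2^(k+1)` for its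
companion `Qₖ` gives `‖Pₖ‖∞ ≤ 2^((k+1)/2)`. With `cₖ = 2^(-k/2) (k+1)⁻²` the series converges
uniformly, and the blocks have disjoint spectra `[2^k, 2^(k+1))`, so `|f̂(n)| = cₖ` there. The
coefficients are in `ℓ²` by Parseval, while for `p < 2` the `k`-th block alone contributes
`2^k cₖ^p = 2^(k(1 - p/2)) (k+1)^(-2p)`, which is unbounded.
-/

open Filter AddCircle

theorem norm_add_eq_of_eq_zero_or_eq_zero {E : Type*} [SeminormedAddGroup E] {a b : E}
    (h : a = 0 ∨ b = 0) : ‖a + b‖ = ‖a‖ + ‖b‖ := by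
  rcases h with rfl | rfl <;> simp

theorem tendsto_pow_div_add_one_rpow_atTop {r : ℝ} (hr : 1 < r) (s : ℝ) :
    Tendsto (fun k : ℕ => r ^ k / ((k : ℝ) + 1) ^ s) atTop atTop := by
  have h := (tendsto_exp_mul_div_rpow_atTop s (Real.log r) (Real.log_pos hr)).comp
    (tendsto_atTop_add_const_right _ 1 tendsto_natCast_atTop_atTop)
  refine (h.atTop_div_const (by positivity : 0 < r)).congr fun k => ?_
  rw [Function.comp_apply, ← Real.rpow_def_of_pos (by positivity),
    Real.rpow_add_one (by positivity), Real.rpow_natCast]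
  field_simp

section FourierCoeff

variable {T : ℝ} [Fact (0 < T)]

-- The `n`-th coordinate of the isometry `L² ≃ ℓ²`, so no bound has to be checked by hand.
noncomputable def fourierCoeffCLM (n : ℤ) : C(AddCircle T, ℂ) →L[ℂ] ℂ :=
  lp.evalCLM ℂ (fun _ : ℤ => ℂ) 2 n ∘L
    fourierBasis.repr.toLinearIsometry.toContinuousLinearMap ∘L
    ContinuousMap.toLp (E := ℂ) 2 haarAddCircle ℂ

@[simp]
theorem fourierCoeffCLM_apply (n : ℤ) (f : C(AddCircle T, ℂ)) :
    fourierCoeffCLM n f = fourierCoeff f n :=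
  (fourierBasis_repr _ n).trans (fourierCoeff_toLp f n)

theorem fourierCoeff_fourier_mul (m n : ℤ) (f : C(AddCircle T, ℂ)) :
    fourierCoeff (⇑((fourier m : C(AddCircle T, ℂ)) * f)) n = fourierCoeff f (n - m) := by
  unfold fourierCoeff
  congr 1 with t
  rw [ContinuousMap.mul_apply, smul_eq_mul, smul_eq_mul, ← mul_assoc, ← fourier_add, neg_sub,
    sub_eq_neg_add]

theorem fourierCoeff_add (f g : C(AddCircle T, ℂ)) (n : ℤ) :
    fourierCoeff (⇑(f + g)) n = fourierCoeff f n + fourierCoeff g n := by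
  simp only [← fourierCoeffCLM_apply, map_add]

theorem fourierCoeff_sub (f g : C(AddCircle T, ℂ)) (n : ℤ) :
    fourierCoeff (⇑(f - g)) n = fourierCoeff f n - fourierCoeff g n := by
  simp only [← fourierCoeffCLM_apply, map_sub]

theorem summable_sq_norm_fourierCoeff (f : C(AddCircle T, ℂ)) :
    Summable fun n : ℤ => ‖fourierCoeff f n‖ ^ 2 := by
  simpa only [fourierCoeff_toLp] using
    (hasSum_sq_fourierCoeff (ContinuousMap.toLp (E := ℂ) 2 haarAddCircle ℂ f)).summable

end FourierCoeff

section RudinShapiro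

variable {T : ℝ}

noncomputable def rudinShapiro : ℕ → C(AddCircle T, ℂ) × C(AddCircle T, ℂ)
  | 0 => (1, 1)
  | k + 1 => ((rudinShapiro k).1 + fourier (2 ^ k) * (rudinShapiro k).2,
      (rudinShapiro k).1 - fourier (2 ^ k) * (rudinShapiro k).2)

theorem norm_sq_rudinShapiro_fst_add_snd (k : ℕ) (x : AddCircle T) :
    ‖(rudinShapiro k).1 x‖ ^ 2 + ‖(rudinShapiro k).2 x‖ ^ 2 = 2 ^ (k + 1) := by
  induction k with
  | zero => norm_num [rudinShapiro]
  | succ k ih =>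
    have parallelogram := parallelogram_law_with_norm ℂ ((rudinShapiro k).1 x)
      (fourier (2 ^ k) x * (rudinShapiro k).2 x)
    rw [norm_mul, fourier_apply, Circle.norm_coe, one_mul] at parallelogram
    simp only [rudinShapiro, ContinuousMap.add_apply, ContinuousMap.sub_apply,
      ContinuousMap.mul_apply, fourier_apply]
    linear_combination parallelogram + 2 * ih

variable [Fact (0 < T)]

theorem norm_rudinShapiro_fst_le (k : ℕ) : ‖(rudinShapiro (T := T) k).1‖ ≤ √2 ^ (k + 1) := by
  refine (ContinuousMap.norm_le _ (by positivity)).mpr fun x => ?_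
  refine (pow_le_pow_iff_left₀ (norm_nonneg _) (by positivity) two_ne_zero).mp ?_
  rw [← pow_mul, mul_comm, pow_mul, Real.sq_sqrt zero_le_two,
    ← norm_sq_rudinShapiro_fst_add_snd k x]
  exact le_add_of_nonneg_right (sq_nonneg _)

theorem norm_fourierCoeff_rudinShapiro (k : ℕ) (n : ℤ) :
    ‖fourierCoeff (rudinShapiro (T := T) k).1 n‖ = (if 0 ≤ n ∧ n < 2 ^ k then 1 else 0) ∧
      ‖fourierCoeff (rudinShapiro (T := T) k).2 n‖ = (if 0 ≤ n ∧ n < 2 ^ k then 1 else 0) := by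
  induction k generalizing n with
  | zero =>
    have h : ⇑(1 : C(AddCircle T, ℂ)) = fourier 0 := funext fun _ => fourier_zero.symm
    have hn : (0 ≤ n ∧ n < 1) ↔ n = 0 := by omega
    simp [rudinShapiro, h, fourierCoeff_fourier, Pi.single_apply, hn, apply_ite]
  | succ k ih =>
    obtain ⟨hP, -⟩ := ih n
    obtain ⟨-, hQ⟩ := ih (n - 2 ^ k)
    have hpos : (0 : ℤ) < 2 ^ k := by positivity
    have disjoint : fourierCoeff (rudinShapiro (T := T) k).1 n = 0 ∨
        fourierCoeff (rudinShapiro (T := T) k).2 (n - 2 ^ k) = 0 := by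
      rw [← norm_eq_zero, hP, ← norm_eq_zero (a := fourierCoeff _ _), hQ]
      generalize (2 : ℤ) ^ k = m at hpos ⊢
      split_ifs <;> first | omega | norm_num
    have dyadic : ((if 0 ≤ n ∧ n < 2 ^ k then 1 else 0) +
        (if 0 ≤ n - 2 ^ k ∧ n - 2 ^ k < 2 ^ k then 1 else 0) : ℝ) =
        if 0 ≤ n ∧ n < 2 ^ (k + 1) then 1 else 0 := by
      rw [pow_succ]
      generalize (2 : ℤ) ^ k = m at hpos ⊢
      split_ifs <;> first | omega | norm_num
    simp only [rudinShapiro]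
    rw [fourierCoeff_add, fourierCoeff_sub, fourierCoeff_fourier_mul,
      sub_eq_add_neg (fourierCoeff _ n), norm_add_eq_of_eq_zero_or_eq_zero (disjoint.imp_right neg_eq_zero.mpr), norm_neg,
      norm_add_eq_of_eq_zero_or_eq_zero disjoint, hP, hQ, dyadic]
    exact ⟨rfl, rfl⟩

end RudinShapiro

section Carleman

variable {T : ℝ} [Fact (0 < T)]

noncomputable def carlemanWeight (k : ℕ) : ℝ := (√2 ^ k * ((k : ℝ) + 1) ^ 2)⁻¹

noncomputable def carlemanBlock (k : ℕ) : C(AddCircle T, ℂ) :=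
  (carlemanWeight k : ℂ) • (fourier (2 ^ k) * (rudinShapiro k).1)

theorem carlemanWeight_pos (k : ℕ) : 0 < carlemanWeight k := by
  rw [carlemanWeight]
  positivity

theorem norm_carlemanBlock_le (k : ℕ) :
    ‖carlemanBlock (T := T) k‖ ≤ √2 * (((k : ℝ) + 1) ^ 2)⁻¹ :=
  calc ‖carlemanBlock (T := T) k‖
      = carlemanWeight k * ‖(fourier (2 ^ k) : C(AddCircle T, ℂ)) * (rudinShapiro k).1‖ := by
        rw [carlemanBlock, norm_smul, Complex.norm_real,
          Real.norm_of_nonneg (carlemanWeight_pos k).le]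
    _ ≤ carlemanWeight k * (‖(fourier (2 ^ k) : C(AddCircle T, ℂ))‖ * ‖(rudinShapiro k).1‖) := by
        gcongr
        · exact (carlemanWeight_pos k).le
        · exact norm_mul_le _ _
    _ ≤ carlemanWeight k * √2 ^ (k + 1) := by
        rw [fourier_norm, one_mul]
        gcongr
        · exact (carlemanWeight_pos k).le
        · exact norm_rudinShapiro_fst_le k
    _ = √2 * (((k : ℝ) + 1) ^ 2)⁻¹ := by
        rw [carlemanWeight, pow_succ √2 k]
        field_simp

theorem summable_carlemanBlock : Summable (carlemanBlock (T := T)) := by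
  refine .of_norm_bounded (.mul_left √2 ?_) norm_carlemanBlock_le
  exact_mod_cast (summable_nat_add_iff 1).mpr (Real.summable_nat_pow_inv.mpr one_lt_two)

noncomputable def carlemanFunction : C(AddCircle T, ℂ) := ∑' k, carlemanBlock k

theorem fourierCoeff_carlemanFunction (n : ℤ) :
    fourierCoeff (carlemanFunction (T := T)) n =
      ∑' k, (carlemanWeight k : ℂ) * fourierCoeff (rudinShapiro (T := T) k).1 (n - 2 ^ k) := by
  rw [← fourierCoeffCLM_apply, carlemanFunction,
    ContinuousLinearMap.map_tsum _ summable_carlemanBlock]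
  refine tsum_congr fun k => ?_
  rw [fourierCoeffCLM_apply, carlemanBlock, ContinuousMap.coe_smul, fourierCoeff.const_smul,
    fourierCoeff_fourier_mul, smul_eq_mul]

theorem norm_fourierCoeff_carlemanFunction {k : ℕ} {n : ℤ} (h₁ : 2 ^ k ≤ n)
    (h₂ : n < 2 ^ (k + 1)) : ‖fourierCoeff (carlemanFunction (T := T)) n‖ = carlemanWeight k := by
  rw [fourierCoeff_carlemanFunction, tsum_eq_single k]
  · rw [norm_mul, Complex.norm_real, Real.norm_of_nonneg (carlemanWeight_pos k).le,
      (norm_fourierCoeff_rudinShapiro k _).1,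
      if_pos ⟨by linarith, by linarith [pow_succ (2 : ℤ) k]⟩, mul_one]
  · intro j hj
    have hn : ¬(0 ≤ n - 2 ^ j ∧ n - 2 ^ j < 2 ^ j) := by
      rintro ⟨h₃, h₄⟩
      have : j < k + 1 := (pow_lt_pow_iff_right₀ (one_lt_two : (1 : ℤ) < 2)).mp (by linarith)
      have : k < j + 1 :=
        (pow_lt_pow_iff_right₀ (one_lt_two : (1 : ℤ) < 2)).mp (by rw [pow_succ]; linarith)
      omega
    rw [norm_eq_zero.mp ((norm_fourierCoeff_rudinShapiro j _).1.trans (if_neg hn)), mul_zero]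

theorem two_pow_mul_carlemanWeight_rpow (p : ℝ) (k : ℕ) :
    2 ^ k * carlemanWeight k ^ p = (2 / √2 ^ p) ^ k / ((k : ℝ) + 1) ^ (2 * p) := by
  rw [carlemanWeight, Real.inv_rpow (by positivity), Real.mul_rpow (by positivity) (by positivity),
    ← Real.rpow_pow_comm (by positivity), Real.rpow_mul (by positivity), Real.rpow_two,
    div_pow]
  field_simp

theorem two_pow_mul_carlemanWeight_rpow_le_tsum {p : ℝ}
    (hs : Summable fun n : ℤ => ‖fourierCoeff (carlemanFunction (T := T)) n‖ ^ p) (k : ℕ) :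
    2 ^ k * carlemanWeight k ^ p ≤ ∑' n : ℤ, ‖fourierCoeff (carlemanFunction (T := T)) n‖ ^ p :=
  calc 2 ^ k * carlemanWeight k ^ p
      = ∑ n ∈ Finset.Ico (2 ^ k : ℤ) (2 ^ (k + 1)),
          ‖fourierCoeff (carlemanFunction (T := T)) n‖ ^ p := by
        rw [Finset.sum_congr rfl fun n hn => by
          rw [norm_fourierCoeff_carlemanFunction (Finset.mem_Ico.mp hn).1
            (Finset.mem_Ico.mp hn).2], Finset.sum_const, Int.card_Ico, nsmul_eq_mul,
          show (2 : ℤ) ^ (k + 1) - 2 ^ k = ((2 ^ k : ℕ) : ℤ) by push_cast; ring,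
          Int.toNat_natCast, Nat.cast_pow, Nat.cast_ofNat]
    _ ≤ _ := hs.sum_le_tsum _ fun n _ => by positivity

theorem not_summable_rpow_norm_fourierCoeff_carlemanFunction {p : ℝ} (hp : p < 2) :
    ¬ Summable fun n : ℤ => ‖fourierCoeff (carlemanFunction (T := T)) n‖ ^ p := by
  intro hs
  have hr : 1 < 2 / √2 ^ p := by
    rw [one_lt_div (by positivity)]
    calc √2 ^ p < √2 ^ (2 : ℝ) := Real.rpow_lt_rpow_of_exponent_lt Real.one_lt_sqrt_two hp
      _ = 2 := by rw [Real.rpow_two, Real.sq_sqrt zero_le_two]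
  obtain ⟨k, hk⟩ := ((tendsto_pow_div_add_one_rpow_atTop hr (2 * p)).eventually_gt_atTop
    (∑' n : ℤ, ‖fourierCoeff (carlemanFunction (T := T)) n‖ ^ p)).exists
  rw [← two_pow_mul_carlemanWeight_rpow] at hk
  exact (two_pow_mul_carlemanWeight_rpow_le_tsum hs k).not_gt hk

end Carleman

/-- Carleman: there is a continuous function on the circle whose Fourier
coefficients lie in `ℓ₂` but in no `ℓ_p`, `p < 2`. -/
theorem exists_carleman_function :
    ∃ f : C(AddCircle (2 * Real.pi), ℂ),
      (Summable fun n : ℤ => ‖fourierCoeff (⇑f) n‖ ^ (2 : ℝ)) ∧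
      ∀ p : ℝ, 0 < p → p < 2 → ¬ Summable fun n : ℤ => ‖fourierCoeff (⇑f) n‖ ^ p :=
  ⟨carlemanFunction, by simpa only [Real.rpow_two] using summable_sq_norm_fourierCoeff _,
    fun _ _ hp => not_summable_rpow_norm_fourierCoeff_carlemanFunction hp⟩
end
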